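/- arXiv:2506.21326 — 2 statements merged into one kernel-verified Lean document; each statement's English description precedes it below -/
import Mathlib

section
/- Let 0 < ξ_1 < ⋯ < ξ_{q+1} = 1 and ω_1, …, ω_{q+1} > 0 be Gauss–Radau data of order q, and let t_{n-1} < t_n be real numbers. Then for every real polynomial v of degree at most q, ∫_{t_{n-1}}^{t_n} ( 𝓛_τ v(t) )^2 dt ≤ ξ_1^{-2} ∫_{t_{n-1}}^{t_n} v(t)^2 dt; in particular the map v ↦ 𝓛_τ v is bounded on polynomials of degree at most q in the L^2(t_{n-1}, t_n) norm with constant ξ_1^{-1}. -/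
open MeasureTheory

/-- `L²`-stability of the Lagrange-type interpolant `𝓛_τ v`:
for Gauss–Radau data `(ξ, ω)` of order `q`, an interval `(t_{n-1}, t_n]`, a polynomial `v`
of degree at most `q` and the interpolant `L = 𝓛_τ v` (degree at most `q`,
`L(t_{n,i}) = ξ_i⁻¹ v(t_{n,i})`), one has
`∫_{t_{n-1}}^{t_n} L² ≤ ξ_1⁻² ∫_{t_{n-1}}^{t_n} v²`, i.e. `v ↦ 𝓛_τ v` is bounded in the
`L²(t_{n-1}, t_n)` norm with constant `ξ_1⁻¹`. -/
theorem gauss_radau_lagrange_L2_stability (q : ℕ) (ξ ω : Fin (q + 1) → ℝ)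
    (hξmono : StrictMono ξ) (hξpos : 0 < ξ 0) (hξlast : ξ (Fin.last q) = 1)
    (hωpos : ∀ i, 0 < ω i)
    (hexact : ∀ p : Polynomial ℝ, p.natDegree ≤ 2 * q →
      ∫ t in (0:ℝ)..1, p.eval t = ∑ i, ω i * p.eval (ξ i))
    (tnm1 tn : ℝ) (htt : tnm1 < tn)
    (v L : Polynomial ℝ) (hv : v.natDegree ≤ q) (hL : L.natDegree ≤ q)
    (hLinterp : ∀ i, L.eval (tnm1 + (tn - tnm1) * ξ i) =
      (ξ i)⁻¹ * v.eval (tnm1 + (tn - tnm1) * ξ i)) :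
    (∫ t in tnm1..tn, (L.eval t) ^ 2) ≤ ((ξ 0)⁻¹) ^ 2 * ∫ t in tnm1..tn, (v.eval t) ^ 2 := by
  set τ := tn - tnm1 with hτdef
  have hτ : 0 < τ := sub_pos.2 htt
  have key : ∀ p : Polynomial ℝ, p.natDegree ≤ 2 * q →
      (∫ t in tnm1..tn, p.eval t) = τ * ∑ i, ω i * p.eval (tnm1 + τ * ξ i) := by
    intro p hp
    set P : Polynomial ℝ := p.comp (Polynomial.C tnm1 + Polynomial.C τ * Polynomial.X) with hP
    have hcomp : ∀ s : ℝ, P.eval s = p.eval (tnm1 + τ * s) := by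
      intro s; simp [hP, Polynomial.eval_comp]
    have hdeg : P.natDegree ≤ 2 * q := by
      calc P.natDegree ≤ p.natDegree *
            (Polynomial.C tnm1 + Polynomial.C τ * Polynomial.X).natDegree :=
          Polynomial.natDegree_comp_le
        _ ≤ p.natDegree * 1 := by
            gcongr
            rw [add_comm]
            exact Polynomial.natDegree_linear_le
        _ ≤ 2 * q := by omega
    have hq := hexact P hdeg
    simp only [hcomp] at hq
    have hchg := intervalIntegral.smul_integral_comp_mul_add
      (a := (0:ℝ)) (b := 1) (fun t => p.eval t) τ tnm1
    simp only [mul_zero, zero_add, mul_one] at hchg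
    have hend : τ + tnm1 = tn := by rw [hτdef]; ring
    rw [hend] at hchg
    rw [← hchg, smul_eq_mul]
    congr 1
    have harg : ∀ x : ℝ, τ * x + tnm1 = tnm1 + τ * x := fun x => by ring
    simp_rw [harg]
    exact hq
  have hdegL : (L ^ 2).natDegree ≤ 2 * q := by
    have := Polynomial.natDegree_pow L 2
    omega
  have hdegv : (v ^ 2).natDegree ≤ 2 * q := by
    have := Polynomial.natDegree_pow v 2
    omega
  have hL2 := key (L ^ 2) hdegL
  have hv2 := key (v ^ 2) hdegv
  simp only [Polynomial.eval_pow] at hL2 hv2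
  rw [hL2, hv2]
  rw [mul_left_comm]
  refine mul_le_mul_of_nonneg_left ?_ hτ.le
  rw [Finset.mul_sum]
  apply Finset.sum_le_sum
  intro i _
  have hξi : 0 < ξ i := lt_of_lt_of_le hξpos (hξmono.monotone (Fin.zero_le i))
  have hinv : (ξ i)⁻¹ ≤ (ξ 0)⁻¹ :=
    inv_anti₀ hξpos (hξmono.monotone (Fin.zero_le i))
  have hinvpos : 0 ≤ (ξ i)⁻¹ := (inv_pos.2 hξi).le
  rw [hLinterp i]
  have hsq : (ξ i)⁻¹ * (ξ i)⁻¹ ≤ (ξ 0)⁻¹ * (ξ 0)⁻¹ :=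
    mul_le_mul hinv hinv hinvpos (inv_pos.2 hξpos).le
  nlinarith [mul_le_mul_of_nonneg_left
    (mul_le_mul_of_nonneg_right hsq (sq_nonneg (v.eval (tnm1 + τ * ξ i)))) (hωpos i).le]
end

section
/- L^r-stability of the L^2-orthogonal projection onto polynomials: let d ≥ 1, k ∈ ℕ, γ_0 > 0 and r ∈ [1, ∞]. There exists a constant C > 0, depending only on d, k, γ_0, r, such that for every bounded open set K ⊂ ℝ^d of diameter h_K that is star-shaped with respect to every point of a ball of radius ρ_K ≥ γ_0 h_K contained in K, and every v ∈ L^2(K) ∩ L^r(K), the L^2(K)-orthogonal projection Π_K^{0,k} v of v onto the space of polynomials of total degree at most k satisfies ‖Π_K^{0,k} v‖_{L^r(K)} ≤ C ‖v‖_{L^r(K)}. -/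
open MeasureTheory ENNReal

/-- `K` is a bounded open subset of `ℝ^d` of diameter `h_K` that is star-shaped with
respect to every point of a ball of radius `ρ_K ≥ γ₀ h_K` contained in `K`. -/
def IsStarShapedCell {d : ℕ} (γ₀ : ℝ) (K : Set (Fin d → ℝ)) : Prop :=
  IsOpen K ∧ Bornology.IsBounded K ∧
    ∃ x₀ ρ, γ₀ * Metric.diam K ≤ ρ ∧ Metric.ball x₀ ρ ⊆ K ∧
      ∀ y ∈ Metric.ball x₀ ρ, StarConvex ℝ y K

/-- `Q` is the `L²(K)`-orthogonal projection of `v` onto polynomials of total degree at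
most `k`: a polynomial of total degree at most `k` with
`∫_K (Q - v) m = 0` for every polynomial `m` of total degree at most `k`. -/
def IsL2Projection {d : ℕ} (k : ℕ) (K : Set (Fin d → ℝ)) (v : (Fin d → ℝ) → ℝ)
    (Q : MvPolynomial (Fin d) ℝ) : Prop :=
  Q.totalDegree ≤ k ∧
    ∀ m : MvPolynomial (Fin d) ℝ, m.totalDegree ≤ k →
      ∫ x in K, (MvPolynomial.eval x Q - v x) * MvPolynomial.eval x m = 0

/-!
On the unit ball, `sup_{B(0,R)} |p|² ≤ C ∫_{B(0,1)} p²` for polynomials of total degree `≤ k`: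
they form a finite-dimensional space on which `p ↦ ‖p‖_{L²(B(0,1))}` is a norm, because a
polynomial vanishing a.e. on an open set is zero. An affine change of variables, which preserves
the total degree, turns this into `sup_K |Q|² ≤ C ρ⁻ᵈ ∫_K Q²` on a cell with
`B(x₀, ρ) ⊆ K ⊆ B̄(x₀, ρ/γ₀)`. Testing the projection identity with `Q` itself gives
`∫_K Q² = ∫_K v Q ≤ ‖Q‖_∞ ‖v‖_{L¹}`, hence `‖Q‖_∞ ≤ C ρ⁻ᵈ ‖v‖_{L¹}`, and Hölder's inequality
together with `|K| ≤ (2ρ/γ₀)ᵈ` yields `‖Q‖_{Lʳ} ≤ C (2/γ₀)ᵈ ‖v‖_{Lʳ}`.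
-/

open Metric MvPolynomial

theorem LinearMap.exists_norm_le_mul_norm_of_injective {𝕜 V E F : Type*}
    [NontriviallyNormedField 𝕜] [CompleteSpace 𝕜] [AddCommGroup V] [Module 𝕜 V]
    [FiniteDimensional 𝕜 V] [NormedAddCommGroup E] [NormedSpace 𝕜 E]
    [NormedAddCommGroup F] [NormedSpace 𝕜 F] (f : V →ₗ[𝕜] E) {g : V →ₗ[𝕜] F}
    (hg : Function.Injective g) :
    ∃ C, 0 < C ∧ ∀ v, ‖f v‖ ≤ C * ‖g v‖ := by
  let e := LinearEquiv.ofInjective g hg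
  obtain ⟨C, hC, hbound⟩ := (LinearMap.toContinuousLinearMap (f ∘ₗ e.symm.toLinearMap)).bound
  exact ⟨C, hC, fun v => by simpa [e] using hbound (e v)⟩

theorem setIntegral_ball_comp_add_smul {ι : Type*} [Fintype ι] (f : (ι → ℝ) → ℝ)
    (x₀ : ι → ℝ) {ρ : ℝ} (hρ : 0 < ρ) :
    ∫ z in ball (0 : ι → ℝ) 1, f (x₀ + ρ • z) =
      (ρ ^ Fintype.card ι)⁻¹ * ∫ x in ball x₀ ρ, f x := by
  rw [Measure.setIntegral_comp_smul_of_pos volume (fun w => f (x₀ + w)) _ hρ,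
    smul_unitBall_of_pos hρ, Module.finrank_fintype_fun_eq_card, smul_eq_mul,
    ← (measurePreserving_add_left volume x₀).setIntegral_preimage_emb
      (measurableEmbedding_addLeft x₀) f, preimage_add_ball, sub_self]

namespace MvPolynomial

theorem totalDegree_aeval_le {σ τ R : Type*} [CommSemiring R]
    {f : σ → MvPolynomial τ R} (hf : ∀ i, (f i).totalDegree ≤ 1) (p : MvPolynomial σ R) :
    (aeval f p).totalDegree ≤ p.totalDegree := by
  conv_lhs => rw [p.as_sum, map_sum]
  refine (totalDegree_finsetSum _ _).trans (Finset.sup_le fun s hs => ?_)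
  rw [aeval_monomial, ← C_eq_algebraMap]
  refine (totalDegree_mul _ _).trans ?_
  rw [totalDegree_C, zero_add, Finsupp.prod]
  refine (totalDegree_finsetProd _ _).trans ((Finset.sum_le_sum fun i _ => ?_).trans
    (le_totalDegree hs))
  calc ((f i) ^ s i).totalDegree ≤ s i * (f i).totalDegree := totalDegree_pow _ _
    _ ≤ s i := by simpa using Nat.mul_le_mul_left (s i) (hf i)

variable {ι : Type*}

theorem exists_totalDegree_le_eval_eq_eval_add_smul (p : MvPolynomial ι ℝ) (x₀ : ι → ℝ)
    (ρ : ℝ) :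
    ∃ q : MvPolynomial ι ℝ, q.totalDegree ≤ p.totalDegree ∧
      ∀ z, eval z q = eval (x₀ + ρ • z) p := by
  refine ⟨aeval (fun i => C (x₀ i) + C ρ * X i) p, totalDegree_aeval_le (fun i => ?_) p,
    fun z => ?_⟩
  · exact (totalDegree_add _ _).trans (max_le (by simp) ((totalDegree_mul _ _).trans (by simp)))
  · rw [aeval_eq_bind₁, eval, eval₂Hom_bind₁]
    congr 2
    funext i
    simp

variable (ι) in
noncomputable def toContinuousMapOn (s : Set (ι → ℝ)) : MvPolynomial ι ℝ →ₗ[ℝ] C(s, ℝ) where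
  toFun p := ⟨fun y => eval (y : ι → ℝ) p, (continuous_eval p).comp continuous_subtype_val⟩
  map_add' p q := by ext; simp
  map_smul' c p := by ext; simp

variable [Fintype ι]

theorem memLp_eval_restrict {s : Set (ι → ℝ)} (hs : Bornology.IsBounded s)
    (p : MvPolynomial ι ℝ) (q : ℝ≥0∞) :
    MemLp (fun x => eval x p) q (volume.restrict s) := by
  have : IsFiniteMeasure (volume.restrict s) :=
    isFiniteMeasure_restrict.mpr hs.measure_lt_top.ne
  obtain ⟨C, hC⟩ := hs.isCompact_closure.exists_bound_of_continuousOn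
    (continuous_eval p).continuousOn
  refine .of_bound (continuous_eval p).aestronglyMeasurable C ?_
  exact ae_restrict_of_ae_restrict_of_subset subset_closure
    (ae_restrict_of_forall_mem isClosed_closure.measurableSet hC)

theorem eq_zero_of_ae_eq_zero {U : Set (ι → ℝ)} (hU : IsOpen U) (hne : U.Nonempty)
    {p : MvPolynomial ι ℝ} (hp : (fun x => eval x p) =ᵐ[volume.restrict U] 0) : p = 0 := by
  have hzero : Set.EqOn (fun x => eval x p) 0 U :=
    Measure.eqOn_open_of_ae_eq hp hU (continuous_eval p).continuousOn continuousOn_const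
  obtain ⟨x, hx⟩ := hne
  obtain ⟨ε, hε, hball⟩ := isOpen_iff.mp hU x hx
  refine funext_set (fun i => ball (x i) ε) (fun i => ?_) fun y hy => ?_
  · rw [Real.ball_eq_Ioo]
    exact Set.Ioo_infinite (by linarith)
  · rw [← ball_pi x hε] at hy
    simpa using hzero (hball hy)

variable (ι) in
noncomputable def toL2UnitBall :
    MvPolynomial ι ℝ →ₗ[ℝ] Lp ℝ 2 (volume.restrict (ball (0 : ι → ℝ) 1)) where
  toFun p := (memLp_eval_restrict isBounded_ball p 2).toLp
  map_add' p q := by simp only [map_add]; exact MemLp.toLp_add _ _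
  map_smul' c p := by simp only [smul_eval]; exact MemLp.toLp_const_smul c _

theorem toL2UnitBall_injective : Function.Injective (toL2UnitBall ι) := by
  rw [← LinearMap.ker_eq_bot, LinearMap.ker_eq_bot']
  intro p hp
  refine eq_zero_of_ae_eq_zero isOpen_ball ⟨0, mem_ball_self one_pos⟩ ?_
  exact (MemLp.coeFn_toLp (memLp_eval_restrict isBounded_ball p 2)).symm.trans
    (Lp.eq_zero_iff_ae_eq_zero.mp hp)

theorem norm_toL2UnitBall_sq (p : MvPolynomial ι ℝ) :
    ‖toL2UnitBall ι p‖ ^ 2 = ∫ x in ball (0 : ι → ℝ) 1, eval x p ^ 2 := by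
  rw [← real_inner_self_eq_norm_sq, L2.inner_def]
  refine integral_congr_ae ?_
  filter_upwards [MemLp.coeFn_toLp (memLp_eval_restrict isBounded_ball p 2)] with x hx
  simp [toL2UnitBall, hx, sq]

theorem exists_sq_eval_le_mul_integral_unitBall (k : ℕ) (R : ℝ) :
    ∃ C, 0 < C ∧ ∀ p : MvPolynomial ι ℝ, p.totalDegree ≤ k → ∀ y ∈ closedBall (0 : ι → ℝ) R,
      eval y p ^ 2 ≤ C * ∫ x in ball (0 : ι → ℝ) 1, eval x p ^ 2 := by
  let P := restrictTotalDegree ι ℝ k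
  obtain ⟨C, hC, hbound⟩ := LinearMap.exists_norm_le_mul_norm_of_injective
    (toContinuousMapOn ι (closedBall 0 R) ∘ₗ P.subtype) (g := toL2UnitBall ι ∘ₗ P.subtype)
    (toL2UnitBall_injective.comp Subtype.val_injective)
  refine ⟨C ^ 2, by positivity, fun p hp y hy => ?_⟩
  calc eval y p ^ 2 = ‖toContinuousMapOn ι (closedBall 0 R) p ⟨y, hy⟩‖ ^ 2 := by
        simp [toContinuousMapOn]
    _ ≤ ‖toContinuousMapOn ι (closedBall 0 R) p‖ ^ 2 := by
        gcongr
        exact ContinuousMap.norm_coe_le_norm _ _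
    _ ≤ (C * ‖toL2UnitBall ι p‖) ^ 2 := by
        gcongr
        exact hbound ⟨p, (mem_restrictTotalDegree ι k p).mpr hp⟩
    _ = C ^ 2 * ∫ x in ball (0 : ι → ℝ) 1, eval x p ^ 2 := by
        rw [mul_pow, norm_toL2UnitBall_sq]

theorem exists_sq_eval_le_mul_setIntegral_of_ball_subset (k : ℕ) (R : ℝ) :
    ∃ C, 0 < C ∧ ∀ (x₀ : ι → ℝ) (ρ : ℝ) (K : Set (ι → ℝ)), 0 < ρ → ball x₀ ρ ⊆ K →
      K ⊆ closedBall x₀ (ρ * R) → ∀ p : MvPolynomial ι ℝ, p.totalDegree ≤ k → ∀ y ∈ K,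
        eval y p ^ 2 ≤ C * (ρ ^ Fintype.card ι)⁻¹ * ∫ x in K, eval x p ^ 2 := by
  obtain ⟨C, hC, hunit⟩ := exists_sq_eval_le_mul_integral_unitBall (ι := ι) k R
  refine ⟨C, hC, fun x₀ ρ K hρ hball hK p hp y hy => ?_⟩
  obtain ⟨q, hq_deg, hq_eval⟩ := exists_totalDegree_le_eval_eq_eval_add_smul p x₀ ρ
  set z := ρ⁻¹ • (y - x₀)
  have hyz : x₀ + ρ • z = y := by
    rw [smul_smul, mul_inv_cancel₀ hρ.ne', one_smul, add_sub_cancel]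
  have hz : z ∈ closedBall 0 R := by
    have hy' := hK hy
    rw [mem_closedBall, dist_eq_norm] at hy'
    rw [mem_closedBall, dist_zero_right, norm_smul, Real.norm_of_nonneg (inv_nonneg.2 hρ.le),
      inv_mul_le_iff₀ hρ]
    exact hy'
  have hK_int : IntegrableOn (fun x => eval x p ^ 2) K :=
    (memLp_eval_restrict (isBounded_closedBall.subset hK) p 2).integrable_sq
  calc eval y p ^ 2 = eval z q ^ 2 := by rw [hq_eval, hyz]
    _ ≤ C * ∫ x in ball 0 1, eval x q ^ 2 := hunit q (hq_deg.trans hp) z hz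
    _ = C * (ρ ^ Fintype.card ι)⁻¹ * ∫ x in ball x₀ ρ, eval x p ^ 2 := by
        simp_rw [hq_eval]
        rw [setIntegral_ball_comp_add_smul (fun x => eval x p ^ 2) x₀ hρ, mul_assoc]
    _ ≤ C * (ρ ^ Fintype.card ι)⁻¹ * ∫ x in K, eval x p ^ 2 := by
        refine mul_le_mul_of_nonneg_left ?_ (by positivity)
        exact setIntegral_mono_set hK_int (.of_forall fun _ => sq_nonneg _) hball.eventuallyLE

end MvPolynomial
section L2Projection
variable {α : Type*} [MeasurableSpace α] {μ : Measure α} {q v : α → ℝ} {A : ℝ}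

theorem sqrt_mul_integral_sq_le_mul_integral_abs (hv : Integrable v μ) (hA : 0 ≤ A)
    (horth : ∫ x, q x ^ 2 ∂μ = ∫ x, v x * q x ∂μ)
    (hbound : ∀ᵐ x ∂μ, q x ^ 2 ≤ A * ∫ y, q y ^ 2 ∂μ) :
    √(A * ∫ x, q x ^ 2 ∂μ) ≤ A * ∫ x, |v x| ∂μ := by
  set T := ∫ x, q x ^ 2 ∂μ
  set s := √(A * T)
  have hs : 0 ≤ s := Real.sqrt_nonneg _
  have hT : T ≤ s * ∫ x, |v x| ∂μ := by
    have hq : ∀ᵐ x ∂μ, |v x * q x| ≤ s * |v x| := hbound.mono fun x hx => by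
      rw [abs_mul, mul_comm]
      exact mul_le_mul_of_nonneg_right (Real.abs_le_sqrt hx) (abs_nonneg _)
    calc T = ∫ x, v x * q x ∂μ := horth
      _ ≤ ∫ x, |v x * q x| ∂μ := le_trans (le_abs_self _) (abs_integral_le_integral_abs)
      _ ≤ ∫ x, s * |v x| ∂μ :=
          integral_mono_of_nonneg (.of_forall fun _ => abs_nonneg _) (hv.abs.const_mul s) hq
      _ = s * ∫ x, |v x| ∂μ := integral_const_mul _ _
  have hsq : s * s ≤ s * (A * ∫ x, |v x| ∂μ) := by
    rw [Real.mul_self_sqrt (mul_nonneg hA (integral_nonneg fun _ => sq_nonneg _))]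
    exact (mul_le_mul_of_nonneg_left hT hA).trans_eq (by ring)
  rcases hs.eq_or_lt with h0 | hpos
  · rw [← h0]; exact mul_nonneg hA (integral_nonneg fun _ => abs_nonneg _)
  · exact le_of_mul_le_mul_left hsq hpos

theorem eLpNorm_le_of_integral_sq_eq_integral_mul [IsFiniteMeasure μ] {r : ℝ≥0∞} (hr : 1 ≤ r)
    (hv : MemLp v r μ) (hA : 0 ≤ A) (horth : ∫ x, q x ^ 2 ∂μ = ∫ x, v x * q x ∂μ)
    (hbound : ∀ᵐ x ∂μ, q x ^ 2 ≤ A * ∫ y, q y ^ 2 ∂μ) :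
    eLpNorm q r μ ≤ ENNReal.ofReal A * μ Set.univ * eLpNorm v r μ := by
  have hv₁ : Integrable v μ := hv.integrable hr
  have hq : ∀ᵐ x ∂μ, ‖q x‖ ≤ A * ∫ x, |v x| ∂μ := hbound.mono fun x hx =>
    (Real.abs_le_sqrt hx).trans (sqrt_mul_integral_sq_le_mul_integral_abs hv₁ hA horth hbound)
  have hv_one : ENNReal.ofReal (∫ x, |v x| ∂μ) = eLpNorm v 1 μ := by
    rw [eLpNorm_one_eq_lintegral_enorm, ← ofReal_integral_norm_eq_lintegral_enorm hv₁]
    rfl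
  have hexp : 0 ≤ 1 / (1 : ℝ≥0∞).toReal - 1 / r.toReal := by
    rcases eq_or_ne r ⊤ with rfl | hr_top
    · simp
    · have : 1 ≤ r.toReal := by simpa using toReal_mono hr_top hr
      simpa using inv_le_one_of_one_le₀ this
  calc eLpNorm q r μ ≤ μ Set.univ ^ r.toReal⁻¹ * ENNReal.ofReal (A * ∫ x, |v x| ∂μ) :=
        eLpNorm_le_of_ae_bound hq
    _ = μ Set.univ ^ r.toReal⁻¹ * (ENNReal.ofReal A * eLpNorm v 1 μ) := by
        rw [ENNReal.ofReal_mul hA, hv_one]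
    _ ≤ μ Set.univ ^ r.toReal⁻¹ * (ENNReal.ofReal A *
          (eLpNorm v r μ * μ Set.univ ^ (1 / (1 : ℝ≥0∞).toReal - 1 / r.toReal))) := by
        gcongr
        exact eLpNorm_le_eLpNorm_mul_rpow_measure_univ hr hv.1
    _ = ENNReal.ofReal A *
          μ Set.univ ^ (r.toReal⁻¹ + (1 / (1 : ℝ≥0∞).toReal - 1 / r.toReal)) *
          eLpNorm v r μ := by
        rw [ENNReal.rpow_add_of_nonneg _ _ (by positivity) hexp]
        ring
    _ = ENNReal.ofReal A * μ Set.univ * eLpNorm v r μ := by simp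

end L2Projection

theorem IsStarShapedCell.exists_ball_subset_subset_closedBall {d : ℕ} {γ₀ : ℝ}
    {K : Set (Fin d → ℝ)} (hK : IsStarShapedCell γ₀ K) (hd : 1 ≤ d) (hγ₀ : 0 < γ₀)
    (hne : K.Nonempty) :
    ∃ x₀ ρ, 0 < ρ ∧ ball x₀ ρ ⊆ K ∧ K ⊆ closedBall x₀ (ρ * γ₀⁻¹) := by
  obtain ⟨hK_open, hK_bdd, x₀, ρ, hρ, hball, -⟩ := hK
  have : Nonempty (Fin d) := ⟨⟨0, hd⟩⟩
  obtain ⟨y, hy⟩ := hne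
  have hdiam : 0 < diam K :=
    diam_pos (infinite_of_mem_nhds y (hK_open.mem_nhds hy)).nontrivial hK_bdd
  have hρ_pos : 0 < ρ := (mul_pos hγ₀ hdiam).trans_le hρ
  refine ⟨x₀, ρ, hρ_pos, hball, fun x hx => ?_⟩
  rw [mem_closedBall, le_mul_inv_iff₀ hγ₀]
  calc dist x x₀ * γ₀ ≤ diam K * γ₀ := by
        gcongr
        exact dist_le_diam_of_mem hK_bdd hx (hball (mem_ball_self hρ_pos))
    _ ≤ ρ := by linarith

theorem IsL2Projection.integral_sq_eq_integral_mul {d k : ℕ} {K : Set (Fin d → ℝ)}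
    {v : (Fin d → ℝ) → ℝ} {Q : MvPolynomial (Fin d) ℝ} (hQ : IsL2Projection k K v Q)
    (hK : Bornology.IsBounded K) (hv : IntegrableOn v K) :
    ∫ x in K, eval x Q ^ 2 = ∫ x in K, v x * eval x Q := by
  have hQ₂ := (memLp_eval_restrict hK Q 2).integrable_sq
  have hvQ : IntegrableOn (fun x => v x * eval x Q) K :=
    hv.mul_of_top_left (memLp_eval_restrict hK Q ⊤)
  have h := hQ.2 Q hQ.1
  simp_rw [sub_mul, ← sq] at h
  rwa [integral_sub hQ₂ hvQ, sub_eq_zero] at h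

/-- `L^r`-stability of the `L²`-orthogonal projection onto polynomials: for `r ∈ [1, ∞]`
there is `C > 0`, depending only on `d, k, γ₀, r`, such that for every star-shaped cell
`K` and every `v ∈ L²(K) ∩ L^r(K)`, the projection `Π_K^{0,k} v` satisfies
`‖Π_K^{0,k} v‖_{L^r(K)} ≤ C ‖v‖_{L^r(K)}`. -/
theorem l2_projection_lr_stability (d k : ℕ) (hd : 1 ≤ d) (γ₀ : ℝ) (hγ₀ : 0 < γ₀)
    (r : ℝ≥0∞) (hr : 1 ≤ r) :
    ∃ C : ℝ, 0 < C ∧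
      ∀ K : Set (Fin d → ℝ), IsStarShapedCell γ₀ K →
      ∀ v : (Fin d → ℝ) → ℝ,
        MemLp v 2 (volume.restrict K) → MemLp v r (volume.restrict K) →
      ∀ Q : MvPolynomial (Fin d) ℝ, IsL2Projection k K v Q →
        eLpNorm (fun x => MvPolynomial.eval x Q) r (volume.restrict K) ≤
          ENNReal.ofReal C * eLpNorm v r (volume.restrict K) := by
  obtain ⟨C, hC, hinv⟩ := exists_sq_eval_le_mul_setIntegral_of_ball_subset (ι := Fin d) k γ₀⁻¹
  refine ⟨C * (2 * γ₀⁻¹) ^ d, by positivity, fun K hK v _ hv Q hQ => ?_⟩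
  rcases K.eq_empty_or_nonempty with rfl | hne
  · simp
  obtain ⟨x₀, ρ, hρ, hball, hsub⟩ := hK.exists_ball_subset_subset_closedBall hd hγ₀ hne
  have hK_bdd : Bornology.IsBounded K := hK.2.1
  have : IsFiniteMeasure (volume.restrict K) :=
    isFiniteMeasure_restrict.mpr hK_bdd.measure_lt_top.ne
  have hbound : ∀ᵐ x ∂volume.restrict K,
      eval x Q ^ 2 ≤ C * (ρ ^ d)⁻¹ * ∫ y in K, eval y Q ^ 2 := by
    refine ae_restrict_of_forall_mem hK.1.measurableSet fun x hx => ?_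
    simpa using hinv x₀ ρ K hρ hball hsub Q hQ.1 x hx
  have hvol : volume K ≤ ENNReal.ofReal ((2 * (ρ * γ₀⁻¹)) ^ d) := by
    simpa [Real.volume_pi_closedBall _ (by positivity : 0 ≤ ρ * γ₀⁻¹)]
      using measure_mono (μ := volume) hsub
  calc eLpNorm (fun x => eval x Q) r (volume.restrict K)
      ≤ ENNReal.ofReal (C * (ρ ^ d)⁻¹) * volume K * eLpNorm v r (volume.restrict K) := by
        simpa using eLpNorm_le_of_integral_sq_eq_integral_mul hr hv (by positivity)
          (hQ.integral_sq_eq_integral_mul hK_bdd (hv.integrable hr)) hbound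
    _ ≤ ENNReal.ofReal (C * (ρ ^ d)⁻¹) * ENNReal.ofReal ((2 * (ρ * γ₀⁻¹)) ^ d) *
          eLpNorm v r (volume.restrict K) := by gcongr
    _ = ENNReal.ofReal (C * (2 * γ₀⁻¹) ^ d) * eLpNorm v r (volume.restrict K) := by
        rw [← ENNReal.ofReal_mul (by positivity)]
        congr 2
        field_simp
        ring
end
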